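/- Let V be a finite-dimensional real vector space and θ a linear endomorphism with θ³ = id and ker(θ − id) = 0. Then J := (1/√3)(θ − θ²) satisfies J² = −id. Moreover, {F ∈ ℝ[θ] : F² = −id} = {J, −J} and {P ∈ ℝ[θ] : P² = id} = {id, −id}; that is, up to sign, J and the identity are the only canonical almost complex structures and canonical almost product structures on a homogeneous 3-symmetric space. -/

import Mathlib

/-!
Since `θ - 1` is injective and `θ³ - 1 = (θ - 1)(θ² + θ + 1)`, the endomorphism `θ` is a root
of `X² + X + 1`, which is irreducible over `ℝ`. Hence `ℝ[θ]` is the image of the field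
`ℝ[X]/(X² + X + 1) ≅ ℂ` under a ring homomorphism, and in the image of a field two elements with
equal squares agree up to sign. As `J² = -1 = (-J)²` and `1² = 1 = (-1)²`, this pins down both sets.
-/

open Polynomial

theorem irreducible_X_sq_add_X_add_one {K : Type*} [Field K] [LinearOrder K]
    [IsStrictOrderedRing K] : Irreducible (X ^ 2 + X + 1 : K[X]) := by
  refine irreducible_of_degree_le_three_of_not_isRoot ?_ fun x hx => ?_
  · rw [show (X ^ 2 + X + 1 : K[X]).natDegree = 2 by compute_degree!]
    decide
  · have : x ^ 2 + x + 1 = 0 := by simpa using hx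
    nlinarith [sq_nonneg (2 * x + 1)]

theorem Module.End.sq_add_self_add_one_eq_zero {R M : Type*} [Ring R] [AddCommGroup M]
    [Module R M] {θ : Module.End R M} (hθ3 : θ ^ 3 = 1) (hθ : LinearMap.ker (θ - 1) = ⊥) :
    θ ^ 2 + θ + 1 = 0 := by
  have hfac : (θ - 1) * (θ ^ 2 + θ + 1) = 0 := by
    rw [show (θ - 1) * (θ ^ 2 + θ + 1) = θ ^ 3 - 1 by noncomm_ring, hθ3, sub_self]
  ext v
  exact LinearMap.ker_eq_bot.mp hθ (by simpa using congrArg (· v) hfac)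

theorem RingHom.eq_or_eq_neg_of_sq_eq_sq {K A : Type*} [Field K] [Ring A] (φ : K →+* A)
    {x y : A} (hx : x ∈ φ.range) (hy : y ∈ φ.range) (h : x ^ 2 = y ^ 2) : x = y ∨ x = -y := by
  rcases subsingleton_or_nontrivial A with hA | hA
  · exact .inl (Subsingleton.elim x y)
  obtain ⟨a, rfl⟩ := hx
  obtain ⟨b, rfl⟩ := hy
  rw [← map_pow, ← map_pow] at h
  rcases sq_eq_sq_iff_eq_or_eq_neg.mp (φ.injective h) with rfl | rfl
  · exact .inl rfl
  · exact .inr (map_neg φ b)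

theorem Polynomial.eq_or_eq_neg_of_sq_eq_sq_of_aeval {K A : Type*} [Field K] [Ring A]
    [Algebra K A] {q : K[X]} (hq : Irreducible q) {θ : A} (hθ : aeval θ q = 0) {x y : A}
    (hx : ∃ p : K[X], x = aeval θ p) (hy : ∃ p : K[X], y = aeval θ p) (h : x ^ 2 = y ^ 2) :
    x = y ∨ x = -y := by
  have := PrincipalIdealRing.isMaximal_of_irreducible hq
  let := Ideal.Quotient.field (Ideal.span {q})
  have hker : ∀ a ∈ Ideal.span {q}, aeval θ a = 0 := fun a ha => by
    obtain ⟨b, rfl⟩ := Ideal.mem_span_singleton'.mp ha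
    rw [map_mul, hθ, mul_zero]
  have hrange : ∀ p : K[X],
      aeval θ p ∈ (Ideal.Quotient.lift _ (aeval θ).toRingHom hker).range :=
    fun p => ⟨Ideal.Quotient.mk _ p, Ideal.Quotient.lift_mk _ _ _⟩
  obtain ⟨p, rfl⟩ := hx
  obtain ⟨p', rfl⟩ := hy
  exact RingHom.eq_or_eq_neg_of_sq_eq_sq _ (hrange p) (hrange p') h

theorem Polynomial.setOf_aeval_and_sq_eq_sq {K A : Type*} [Field K] [Ring A] [Algebra K A]
    {q : K[X]} (hq : Irreducible q) {θ : A} (hθ : aeval θ q = 0) {z : A}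
    (hz : ∃ p : K[X], z = aeval θ p) :
    {x : A | (∃ p : K[X], x = aeval θ p) ∧ x ^ 2 = z ^ 2} = {z, -z} := by
  ext x
  refine ⟨fun ⟨hx, h⟩ => eq_or_eq_neg_of_sq_eq_sq_of_aeval hq hθ hx hz h, ?_⟩
  rintro (rfl | rfl)
  · exact ⟨hz, rfl⟩
  · obtain ⟨p, hp⟩ := hz
    exact ⟨⟨-p, by rw [map_neg, hp]⟩, neg_sq _⟩

theorem sub_sq_sq_eq_neg_three {A : Type*} [Ring A] {θ : A} (h : θ ^ 2 + θ + 1 = 0) :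
    (θ - θ ^ 2) ^ 2 = -3 := by
  rw [eq_neg_iff_add_eq_zero,
    show (θ - θ ^ 2) ^ 2 + 3 = (θ ^ 2 + θ + 1) * (θ ^ 2 - 3 * θ + 3) by noncomm_ring; simp,
    h, zero_mul]

theorem inv_sqrt_three_smul_sub_sq_sq_eq_neg_one {A : Type*} [Ring A] [Algebra ℝ A] {θ : A}
    (h : θ ^ 2 + θ + 1 = 0) : ((1 / Real.sqrt 3) • (θ - θ ^ 2)) ^ 2 = -1 := by
  rw [_root_.smul_pow, sub_sq_sq_eq_neg_three h, div_pow, one_pow, Real.sq_sqrt (by norm_num),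
    smul_neg, neg_inj, one_div, inv_smul_eq_iff₀ three_ne_zero, ofNat_smul_eq_nsmul, nsmul_one,
    Nat.cast_ofNat]

theorem stmt_5 (V : Type*) [AddCommGroup V] [Module ℝ V]
    (θ : Module.End ℝ V) (hθ3 : θ ^ 3 = 1) (hθ : LinearMap.ker (θ - 1) = ⊥)
    (J : Module.End ℝ V) (hJ : J = (1 / Real.sqrt 3) • (θ - θ ^ 2)) :
    J ^ 2 = -1 ∧
    {F : Module.End ℝ V | (∃ p : Polynomial ℝ, F = Polynomial.aeval θ p) ∧
      F ^ 2 = -1} = {J, -J} ∧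
    {P : Module.End ℝ V | (∃ p : Polynomial ℝ, P = Polynomial.aeval θ p) ∧
      P ^ 2 = 1} = {1, -1} := by
  have hθ2 := Module.End.sq_add_self_add_one_eq_zero hθ3 hθ
  have hq : aeval θ (X ^ 2 + X + 1 : ℝ[X]) = 0 := by simpa using hθ2
  have hJ2 : J ^ 2 = -1 := hJ ▸ inv_sqrt_three_smul_sub_sq_sq_eq_neg_one hθ2
  have hJmem : ∃ p : ℝ[X], J = aeval θ p :=
    ⟨C (1 / Real.sqrt 3) * (X - X ^ 2), by simp [hJ, Algebra.smul_def]⟩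
  refine ⟨hJ2, ?_, ?_⟩
  · rw [← hJ2]
    exact setOf_aeval_and_sq_eq_sq irreducible_X_sq_add_X_add_one hq hJmem
  · simpa using setOf_aeval_and_sq_eq_sq irreducible_X_sq_add_X_add_one hq ⟨1, (map_one _).symm⟩
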